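/- For every natural number m ≥ 2, the quantity ω_q(m) := (1/2^m) · max_θ ((1+cos θ)^{m-1} + (1+sin θ)^{m-1}) satisfies ω_q(m) > 1/2 + 1/2^m. -/

import Mathlib

/-!
At `θ = 0` the sum `(1 + cos θ) ^ k + (1 + sin θ) ^ k`, `k = m - 1`, equals `2 ^ k + 1`, which
scales to exactly the classical value. Its derivative there is `k ≠ 0`, so `0` is not a maximum
and the supremum is strictly larger.
-/

open Real

theorem lt_ciSup_of_hasDerivAt_ne_zero {f : ℝ → ℝ} {f' x : ℝ} (hf : HasDerivAt f f' x)
    (hf' : f' ≠ 0) (hbdd : BddAbove (Set.range f)) : f x < ⨆ y, f y := by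
  refine (le_ciSup hbdd x).lt_of_ne fun hmax => hf' ?_
  have hmaxOn : IsMaxOn f Set.univ x := fun y _ => hmax ▸ le_ciSup hbdd y
  exact (hmaxOn.isLocalMax Filter.univ_mem).hasDerivAt_eq_zero hf

theorem bddAbove_range_one_add_cos_pow_add_one_add_sin_pow (k : ℕ) :
    BddAbove (Set.range fun θ : ℝ => (1 + cos θ) ^ k + (1 + sin θ) ^ k) := by
  refine ⟨2 ^ k + 2 ^ k, ?_⟩
  rintro _ ⟨θ, rfl⟩
  exact add_le_add
    (pow_le_pow_left₀ (by linarith [neg_one_le_cos θ]) (by linarith [cos_le_one θ]) k)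
    (pow_le_pow_left₀ (by linarith [neg_one_le_sin θ]) (by linarith [sin_le_one θ]) k)

theorem hasDerivAt_one_add_cos_pow_add_one_add_sin_pow_zero (k : ℕ) :
    HasDerivAt (fun θ : ℝ => (1 + cos θ) ^ k + (1 + sin θ) ^ k) k 0 := by
  have hcos := ((hasDerivAt_cos 0).const_add 1).fun_pow k
  have hsin := ((hasDerivAt_sin 0).const_add 1).fun_pow k
  simpa using hcos.fun_add hsin

theorem stmt_10 (m : ℕ) (hm : 2 ≤ m) :
    (1 / 2 ^ m : ℝ) * (⨆ θ : ℝ, (1 + cos θ) ^ (m - 1) + (1 + sin θ) ^ (m - 1)) >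
      1 / 2 + 1 / 2 ^ m := by
  obtain ⟨k, rfl⟩ : ∃ k, m = k + 1 := ⟨m - 1, by omega⟩
  have hk : (k : ℝ) ≠ 0 := by exact_mod_cast (show k ≠ 0 by omega)
  have hsup := lt_ciSup_of_hasDerivAt_ne_zero
    (hasDerivAt_one_add_cos_pow_add_one_add_sin_pow_zero k) hk
    (bddAbove_range_one_add_cos_pow_add_one_add_sin_pow k)
  norm_num only [cos_zero, sin_zero, one_pow] at hsup
  rw [Nat.add_sub_cancel, gt_iff_lt, pow_succ]
  calc (1 / 2 + 1 / (2 ^ k * 2) : ℝ) = 1 / (2 ^ k * 2) * (2 ^ k + 1) := by field_simp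
    _ < _ := by gcongr
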